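/- Let q ≥ 5, let t(q) be the smallest size of an almost complete subset of a nondegenerate conic in PG(2,q), and suppose an integer w < (q+3)/2 satisfies w - (q-1)·ln((q+1)/(q+1-w)) ≤ ln(1/(q√(3q ln q))). Then t(q) ≤ w + 1 + √(q/(3 ln q)). -/

import Mathlib

/-!
Greedy construction. Let `P ∈ M_q` be uncovered by `S ⊆ C`. As `P` is neither on `C` nor its
nucleus, the polar of `P` is a line and meets the arc `C` in at most two points; every other
`s ∈ S` gives a second point of `C` on the line `Ps`, which lies outside `S`, and distinct `s`
give distinct points. So at least `|S| - 2` of the `q + 1 - |S|` points of `C \ S` cover `P`,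
and by averaging one of them, added to `S`, leaves at most the fraction
`1 - (i - 2)/(q + 1 - i)` of the uncovered points uncovered (`i = |S|`). Starting from one
point (at most `q²` uncovered points) and adding `w` points greedily leaves at most
`q² ∏ (1 - (i - 2)/(q + 1 - i)) ≤ q² e^(w - (q - 1) ln((q + 1)/(q + 1 - w)))`, hence at most
`√(q/(3 ln q))`, uncovered points. One further conic point for each of them yields an almost
complete subset of the required size, proper because that size is below `q + 1`.
-/

open scoped Classical

noncomputable section

/-- The projective plane `PG(2,q)` over a field `F` (with `q = #F`). -/
abbrev PG2 (F : Type) [Field F] : Type := Projectivization F (Fin 3 → F)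

variable {F : Type} [Field F] [Fintype F]

/-- Three points of `PG(2,q)` are collinear if they lie in a common
projective line, i.e. a common 2-dimensional linear subspace. -/
def Collinear3 (a b c : PG2 F) : Prop :=
  ∃ W : Submodule F (Fin 3 → F), Module.finrank F W = 2 ∧
    a.rep ∈ W ∧ b.rep ∈ W ∧ c.rep ∈ W

/-- A (projective) line of `PG(2,q)`: the point set of a 2-dimensional linear subspace. -/
def IsLine (L : Set (PG2 F)) : Prop :=
  ∃ W : Submodule F (Fin 3 → F), Module.finrank F W = 2 ∧ L = {p : PG2 F | p.rep ∈ W}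

/-- An arc: no three distinct points collinear. -/
def IsArc (C : Set (PG2 F)) : Prop :=
  ∀ a ∈ C, ∀ b ∈ C, ∀ c ∈ C, a ≠ b → b ≠ c → a ≠ c → ¬ Collinear3 a b c

/-- A nondegenerate conic: the zero locus of a quadratic form which is
a `(q+1)`-arc. -/
def IsConic (C : Set (PG2 F)) : Prop :=
  (∃ Q : QuadraticForm F (Fin 3 → F), C = {p : PG2 F | Q p.rep = 0}) ∧
  IsArc C ∧ C.ncard = Fintype.card F + 1

/-- A tangent of `C`: a line meeting `C` in exactly one point. -/
def IsTangent (C L : Set (PG2 F)) : Prop := IsLine L ∧ (L ∩ C).ncard = 1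

/-- A bisecant of `C`: a line meeting `C` in exactly two points. -/
def IsBisecant (C L : Set (PG2 F)) : Prop := IsLine L ∧ (L ∩ C).ncard = 2

/-- A point `P` is covered by a point set `K` if `P` is collinear with two
distinct points of `K` (i.e. `P` lies on a bisecant of `K`). -/
def Covered (K : Set (PG2 F)) (P : PG2 F) : Prop :=
  ∃ a ∈ K, ∃ b ∈ K, a ≠ b ∧ Collinear3 a b P

/-- `O` is a nucleus of `C` if every tangent of `C` passes through `O`. -/
def IsNucleus (C : Set (PG2 F)) (O : PG2 F) : Prop :=
  ∀ L : Set (PG2 F), IsTangent C L → O ∈ L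

/-- The point set `M_q`: all points off `C` (and also off the nucleus when `q` is even). -/
def Mset (C : Set (PG2 F)) : Set (PG2 F) :=
  if Even (Fintype.card F) then (Set.univ \ C) \ {O : PG2 F | IsNucleus C O}
  else Set.univ \ C

/-- An almost complete subset of the conic `C`: a proper subset of `C`
covering every point of `M_q`. -/
def IsACSubset (C S : Set (PG2 F)) : Prop :=
  S ⊂ C ∧ ∀ P ∈ Mset C, Covered S P

/-- The smallest size of an almost complete subset of `C`. -/
noncomputable def tAC (C : Set (PG2 F)) : ℕ :=
  sInf {n : ℕ | ∃ S : Set (PG2 F), IsACSubset C S ∧ S.ncard = n}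

end

open scoped LinearAlgebra.Projectivization

namespace Projectivization

section DivisionRing

variable {K V : Type*} [DivisionRing K] [AddCommGroup V] [Module K V]

theorem rep_mem_span_singleton_iff {a b : ℙ K V} : a.rep ∈ K ∙ b.rep ↔ a = b := by
  rw [Submodule.mem_span_singleton]
  conv_rhs => rw [← mk_rep a, ← mk_rep b, mk_eq_mk_iff']

theorem finrank_span_rep_pair {a b : ℙ K V} (h : a ≠ b) :
    Module.finrank K (Submodule.span K {a.rep, b.rep}) = 2 := by
  rw [← Matrix.range_cons_cons_empty a.rep b.rep ![],
    finrank_span_eq_card (linearIndependent_pair_iff_ne.2 h), Fintype.card_fin]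

end DivisionRing

section Quadric

open QuadraticMap

variable {K V : Type*} [Field K] [AddCommGroup V] [Module K V] {Q : QuadraticForm K V}

theorem apply_rep_mk_eq_zero {v : V} (hv : v ≠ 0) (hQ : Q v = 0) : Q (mk K v hv).rep = 0 := by
  obtain ⟨a, ha⟩ := exists_smul_eq_mk_rep K v hv
  rw [← ha, Units.smul_def, QuadraticMap.map_smul, hQ, smul_zero]

/-- The second point is `mk (polar Q c x • x - Q x • c)`. -/
theorem exists_isotropic_ne_of_polar_ne_zero {c : ℙ K V} (hc : Q c.rep = 0) {x : V}
    (hx : polar Q c.rep x ≠ 0) :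
    ∃ σ : ℙ K V, Q σ.rep = 0 ∧ σ ≠ c ∧ σ.rep ∈ Submodule.span K {c.rep, x} := by
  have hQv : Q (polar Q c.rep x • x - Q x • c.rep) = 0 := by
    rw [sub_eq_add_neg, QuadraticMap.map_add (⇑Q), ← neg_smul, QuadraticMap.map_smul,
      QuadraticMap.map_smul, hc, polar_smul_left, polar_smul_right, polar_comm Q x]
    simp only [smul_eq_mul]; ring
  have hpol : polar Q c.rep (polar Q c.rep x • x - Q x • c.rep) = polar Q c.rep x ^ 2 := by
    rw [polar_sub_right, polar_smul_right, polar_smul_right, polar_self, hc]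
    simp only [smul_eq_mul, nsmul_zero, mul_zero, sub_zero]; ring
  have hv : polar Q c.rep x • x - Q x • c.rep ≠ 0 := fun h =>
    hx (by simpa [h] using hpol.symm)
  obtain ⟨a, hrep⟩ := exists_smul_eq_mk_rep K _ hv
  refine ⟨mk K _ hv, apply_rep_mk_eq_zero hv hQv, fun h => hx ?_, ?_⟩
  · have : polar Q c.rep (mk K _ hv).rep = 0 := by rw [h, polar_self, hc, nsmul_zero]
    rw [← hrep, Units.smul_def, polar_smul_right, hpol, smul_eq_mul] at this
    exact pow_eq_zero_iff two_ne_zero |>.1 ((mul_eq_zero.1 this).resolve_left a.ne_zero)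
  · rw [← hrep]
    exact Submodule.smul_mem _ _ (Submodule.sub_mem _
      (Submodule.smul_mem _ _ (Submodule.subset_span (by simp)))
      (Submodule.smul_mem _ _ (Submodule.subset_span (by simp))))

/-- The whole line through two orthogonal isotropic points is isotropic; take `mk (c + c')`. -/
theorem exists_third_isotropic_of_polar_eq_zero {c c' : ℙ K V} (hc : Q c.rep = 0)
    (hc' : Q c'.rep = 0) (hne : c ≠ c') (hpol : polar Q c.rep c'.rep = 0) :
    ∃ d : ℙ K V, Q d.rep = 0 ∧ d ≠ c ∧ d ≠ c' ∧
      d.rep ∈ Submodule.span K {c.rep, c'.rep} := by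
  have hind := LinearIndependent.pair_iff.1 (linearIndependent_pair_iff_ne.2 hne)
  have hv : c.rep + c'.rep ≠ 0 := fun h => one_ne_zero (hind 1 1 (by simpa using h)).1
  have hQv : Q (c.rep + c'.rep) = 0 := by
    rw [QuadraticMap.map_add (⇑Q), hc, hc', hpol, add_zero, add_zero]
  refine ⟨mk K _ hv, apply_rep_mk_eq_zero hv hQv, fun h => ?_, fun h => ?_, ?_⟩
  · obtain ⟨a, ha⟩ := (mk_eq_mk_iff' K _ _ hv c.rep_nonzero).1 (h.trans (mk_rep c).symm)
    have := (hind (a - 1) (-1) (by rw [sub_smul, ha]; simp)).2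
    simp at this
  · obtain ⟨a, ha⟩ := (mk_eq_mk_iff' K _ _ hv c'.rep_nonzero).1 (h.trans (mk_rep c').symm)
    have := (hind (-1) (a - 1) (by rw [sub_smul, ha]; simp)).1
    simp at this
  · obtain ⟨a, hrep⟩ := exists_smul_eq_mk_rep K _ hv
    rw [← hrep]
    exact Submodule.smul_mem _ _ (Submodule.add_mem _
      (Submodule.subset_span (by simp)) (Submodule.subset_span (by simp)))

end Quadric

end Projectivization

section Geometry

open QuadraticMap Projectivization

variable {F : Type} [Field F]

theorem collinear3_of_rep_mem_span {a b x y z : PG2 F} (hab : a ≠ b)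
    (hx : x.rep ∈ Submodule.span F {a.rep, b.rep})
    (hy : y.rep ∈ Submodule.span F {a.rep, b.rep})
    (hz : z.rep ∈ Submodule.span F {a.rep, b.rep}) : Collinear3 x y z :=
  ⟨_, finrank_span_rep_pair hab, hx, hy, hz⟩

theorem IsArc.ncard_le_two {C : Set (PG2 F)} (hC : IsArc C) {W : Submodule F (Fin 3 → F)}
    (hW : Module.finrank F W = 2) : {p ∈ C | p.rep ∈ W}.ncard ≤ 2 := by
  by_contra! h
  obtain ⟨a, b, c, ha, hb, hc, hab, hac, hbc⟩ :=
    (Set.two_lt_ncard_iff (Set.finite_of_ncard_pos (by omega))).1 h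
  exact hC a ha.1 b hb.1 c hc.1 hab hbc hac ⟨W, hW, ha.2, hb.2, hc.2⟩

theorem finrank_ker_polarBilin {Q : QuadraticForm F (Fin 3 → F)} {x : Fin 3 → F}
    (hx : Q.polarBilin x ≠ 0) : Module.finrank F (LinearMap.ker (Q.polarBilin x)) = 2 := by
  have := Module.Dual.finrank_ker_add_one_of_ne_zero hx
  rw [Module.finrank_fin_fun] at this
  omega

theorem Covered.mono {K K' : Set (PG2 F)} (h : K ⊆ K') {P : PG2 F} (hP : Covered K P) :
    Covered K' P :=
  let ⟨a, ha, b, hb, hab, hcol⟩ := hP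
  ⟨a, h ha, b, h hb, hab, hcol⟩

variable {Q : QuadraticForm F (Fin 3 → F)} {C : Set (PG2 F)} (hCQ : C = {p | Q p.rep = 0})
  (hArc : IsArc C)
include hCQ hArc

theorem polar_rep_ne_zero_of_isArc {c c' : PG2 F} (hc : c ∈ C) (hc' : c' ∈ C) (hne : c ≠ c') :
    polar Q c.rep c'.rep ≠ 0 := fun hpol => by
  subst hCQ
  obtain ⟨d, hd, hdc, hdc', hspan⟩ := exists_third_isotropic_of_polar_eq_zero hc hc' hne hpol
  exact hArc c hc c' hc' d hd hne hdc'.symm hdc.symm <| collinear3_of_rep_mem_span hne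
    (Submodule.subset_span (by simp)) (Submodule.subset_span (by simp)) hspan

/-- The polar line of the point of contact `c` of a tangent `W` contains `W` (a line through `c`
not orthogonal to `c` is a secant), so it equals `W`; and it contains `P`. -/
theorem isNucleus_of_polarBilin_eq_zero (hC : 1 < C.ncard) {P : PG2 F}
    (hP : Q.polarBilin P.rep = 0) : IsNucleus C P := by
  subst hCQ
  rintro L ⟨⟨W, hW, rfl⟩, hL⟩
  obtain ⟨c, hcL⟩ := Set.ncard_eq_one.1 hL
  have hc : c ∈ {p : PG2 F | p.rep ∈ W} ∩ {p | Q p.rep = 0} := hcL ▸ rfl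
  have hWker : W ≤ LinearMap.ker (Q.polarBilin c.rep) := fun x hx => by
    by_contra hcx
    obtain ⟨σ, hσ, hσc, hspan⟩ := exists_isotropic_ne_of_polar_ne_zero hc.2 hcx
    have hσW : σ.rep ∈ W :=
      Submodule.span_le.2 (Set.insert_subset_iff.2 ⟨hc.1, by simpa using hx⟩) hspan
    exact hσc (hcL.subset ⟨hσW, hσ⟩)
  obtain ⟨c', hc', hc'c⟩ := Set.exists_ne_of_one_lt_ncard hC c
  have hker : Q.polarBilin c.rep ≠ 0 := fun h =>
    polar_rep_ne_zero_of_isArc rfl hArc hc.2 hc' hc'c.symm (by simp [← polarBilin_apply_apply, h])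
  have hWeq := Submodule.eq_of_le_of_finrank_le hWker (by rw [finrank_ker_polarBilin hker, hW])
  change P.rep ∈ W
  rw [hWeq, LinearMap.mem_ker, polarBilin_apply_apply, polar_comm, ← polarBilin_apply_apply, hP,
    LinearMap.zero_apply]

end Geometry

theorem Set.exists_ncard_mul_ncard_sep_le {α β : Type*} {D : Set α} {U : Set β} (hD : D.Finite)
    (hU : U.Finite) (hne : D.Nonempty) (r : α → β → Prop) {k : ℕ}
    (hk : ∀ b ∈ U, {a ∈ D | r a b}.ncard ≤ k) :
    ∃ a ∈ D, D.ncard * {b ∈ U | r a b}.ncard ≤ U.ncard * k := by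
  classical
  obtain ⟨D, rfl⟩ := hD.exists_finset_coe
  obtain ⟨U, rfl⟩ := hU.exists_finset_coe
  obtain ⟨a, ha, hmin⟩ := D.exists_min_image (fun a => (U.bipartiteAbove r a).card)
    (Finset.coe_nonempty.1 hne)
  refine ⟨a, ha, ?_⟩
  have hcard : ∀ a, {b ∈ (U : Set β) | r a b}.ncard = (U.bipartiteAbove r a).card := fun a =>
    by rw [← Set.ncard_coe_finset, Finset.coe_bipartiteAbove]; rfl
  have hcard' : ∀ b, {a ∈ (D : Set α) | r a b}.ncard = (D.bipartiteBelow r b).card := fun b =>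
    by rw [← Set.ncard_coe_finset, Finset.coe_bipartiteBelow]; rfl
  rw [hcard, Set.ncard_coe_finset, Set.ncard_coe_finset]
  exact Finset.card_mul_le_card_mul r hmin fun b hb => hcard' b ▸ hk b hb

/-- `greedyRatio q j = 1 - (j - 2) / (q + 1 - j)`: adding the best of the `q + 1 - j` conic
points outside a `j`-subset leaves at most this fraction of its uncovered points uncovered. -/
noncomputable def greedyRatio (q j : ℕ) : ℝ := ((q : ℝ) + 3 - 2 * j) / ((q : ℝ) + 1 - j)

theorem greedyRatio_nonneg {q j : ℕ} (hj : 2 * j ≤ q + 2) : 0 ≤ greedyRatio q j := by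
  have : (2 * j : ℝ) ≤ q + 2 := by exact_mod_cast hj
  exact div_nonneg (by linarith) (by linarith)

section Counting

open QuadraticMap Projectivization

variable {F : Type} [Field F] [Fintype F]

theorem Mset_subset_compl (C : Set (PG2 F)) : Mset C ⊆ Cᶜ := by
  unfold Mset
  split_ifs
  exacts [fun P hP => hP.1.2, fun P hP => hP.2]

theorem ncard_Mset_le {C : Set (PG2 F)} {q : ℕ} (hq : Fintype.card F = q)
    (hC : C.ncard = q + 1) : (Mset C).ncard ≤ q ^ 2 := by
  have hPG2 : Nat.card (PG2 F) = 1 + q + q ^ 2 := by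
    rw [card_of_finrank F (Fin 3 → F) (Module.finrank_fin_fun F), Nat.card_eq_fintype_card, hq]
    simp [Finset.sum_range_succ]
  have := Set.ncard_le_ncard (Mset_subset_compl C)
  rw [Set.ncard_compl, hPG2, hC] at this
  omega

def uncovered (C K : Set (PG2 F)) : Set (PG2 F) := {P ∈ Mset C | ¬ Covered K P}

variable {Q : QuadraticForm F (Fin 3 → F)} {C : Set (PG2 F)} (hCQ : C = {p | Q p.rep = 0})
  (hArc : IsArc C) (hC : 1 < C.ncard)
include hCQ hArc hC

theorem polarBilin_rep_ne_zero_of_mem_Mset {P : PG2 F} (hP : P ∈ Mset C) :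
    Q.polarBilin P.rep ≠ 0 := by
  subst hCQ
  have hQP : Q P.rep ≠ 0 := Mset_subset_compl _ hP
  unfold Mset at hP
  split_ifs at hP with hq
  · exact fun h => hP.2 (isNucleus_of_polarBilin_eq_zero rfl hArc hC h)
  · have h2 : (2 : F) ≠ 0 :=
      Ring.two_ne_zero fun h => hq (Nat.even_iff.2 (FiniteField.even_card_iff_char_two.1 h))
    intro h
    have hPP : polar Q P.rep P.rep = 0 := by
      rw [← polarBilin_apply_apply, h, LinearMap.zero_apply]
    rw [polar_self, nsmul_eq_mul, Nat.cast_ofNat] at hPP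
    exact hQP ((mul_eq_zero.1 hPP).resolve_left h2)

theorem ncard_polar_eq_zero_le_two {P : PG2 F} (hP : P ∈ Mset C) :
    {c ∈ C | polar Q P.rep c.rep = 0}.ncard ≤ 2 := by
  subst hCQ
  exact hArc.ncard_le_two
    (finrank_ker_polarBilin (polarBilin_rep_ne_zero_of_mem_Mset rfl hArc hC hP))

/-- Each `s ∈ S` not orthogonal to `P` sends the line `Ps` to a second conic point, which lies
outside `S` and completes a bisecant through `P`; distinct such `s` give distinct points since
the conic is an arc. -/
theorem ncard_le_ncard_covering_insert_add_two {S : Set (PG2 F)}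
    (hS : S ⊆ C) {P : PG2 F} (hP : P ∈ Mset C)
    (hPS : ¬ Covered S P) :
    S.ncard ≤ {c ∈ C \ S | Covered (insert c S) P}.ncard + 2 := by
  have hmem : ∀ p, p ∈ C ↔ Q p.rep = 0 := by simp [hCQ]
  set Bad := {c ∈ C | polar Q P.rep c.rep = 0}
  have hQP : Q P.rep ≠ 0 := fun h => Mset_subset_compl C hP ((hmem P).2 h)
  have hsecond :
      ∀ s ∈ S \ Bad, ∃ σ ∈ C, σ ≠ s ∧ σ.rep ∈ Submodule.span F {s.rep, P.rep} := by
    intro s hs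
    obtain ⟨σ, hσ, hσs, hspan⟩ := exists_isotropic_ne_of_polar_ne_zero ((hmem s).1 (hS hs.1))
      (by rw [polar_comm]; exact fun h => hs.2 ⟨hS hs.1, h⟩)
    exact ⟨σ, (hmem σ).2 hσ, hσs, hspan⟩
  choose! f hfC hfs hfspan using hsecond
  have hsP : ∀ s ∈ S, s ≠ P := fun s hs h => hQP ((hmem P).1 (h ▸ hS hs))
  have hfP : ∀ s ∈ S \ Bad, f s ≠ P := fun s hs h => hQP ((hmem P).1 (h ▸ hfC s hs))
  have hcol : ∀ s ∈ S \ Bad, Collinear3 s (f s) P := fun s hs =>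
    collinear3_of_rep_mem_span (hsP s hs.1) (Submodule.subset_span (by simp)) (hfspan s hs)
      (Submodule.subset_span (by simp))
  have hmaps : ∀ s ∈ S \ Bad, f s ∈ {c ∈ C \ S | Covered (insert c S) P} :=
    fun s hs =>
      ⟨⟨hfC s hs, fun hfS => hPS ⟨s, hs.1, f s, hfS, (hfs s hs).symm, hcol s hs⟩⟩,
      s, Set.mem_insert_of_mem _ hs.1, f s, Set.mem_insert _ _, (hfs s hs).symm, hcol s hs⟩
  have hinj : Set.InjOn f (S \ Bad) := by
    intro s hs s' hs' hss'
    by_contra hne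
    have hline : ∀ t ∈ S \ Bad, f t = f s → t.rep ∈ Submodule.span F {(f s).rep, P.rep} :=
      fun t ht h => mem_span_insert_exchange (by rw [← h]; exact hfspan t ht)
        fun h' => hfP s hs (rep_mem_span_singleton_iff.1 h')
    exact hArc s (hS hs.1) s' (hS hs'.1) (f s) (hfC s hs) hne
      (fun h => hfs s' hs' (hss'.symm.trans h.symm)) (hfs s hs).symm
      (collinear3_of_rep_mem_span (hfP s hs) (hline s hs rfl) (hline s' hs' hss'.symm)
        (Submodule.subset_span (by simp)))
  calc S.ncard ≤ (S \ Bad).ncard + Bad.ncard := Set.ncard_le_ncard_sdiff_add_ncard S Bad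
    _ ≤ _ := add_le_add (Set.ncard_le_ncard_of_injOn f hmaps hinj)
      (ncard_polar_eq_zero_le_two hCQ hArc hC hP)

theorem exists_mul_ncard_uncovered_insert_le {q : ℕ}
    (hCq : C.ncard = q + 1) {S : Set (PG2 F)}
    (hS : S ⊆ C) (hSq : S.ncard ≤ q) :
    ∃ c ∈ C \ S,
      (q + 1 - S.ncard) * (uncovered C (insert c S)).ncard ≤
        (uncovered C S).ncard * (q + 3 - 2 * S.ncard) := by
  have hD : (C \ S).ncard = q + 1 - S.ncard := by rw [Set.ncard_sdiff hS, hCq]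
  have hsurvivors : ∀ P ∈ uncovered C S,
      {c ∈ C \ S | ¬ Covered (insert c S) P}.ncard ≤ q + 3 - 2 * S.ncard := fun P hP => by
    have hsplit : {c ∈ C \ S | Covered (insert c S) P}.ncard +
        {c ∈ C \ S | ¬ Covered (insert c S) P}.ncard = (C \ S).ncard :=
      Set.ncard_inter_add_ncard_sdiff_eq_ncard _ _
    have := ncard_le_ncard_covering_insert_add_two hCQ hArc hC hS hP.1 hP.2
    omega
  obtain ⟨c, hc, hle⟩ := Set.exists_ncard_mul_ncard_sep_le (Set.toFinite _) (Set.toFinite _)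
    (Set.nonempty_of_ncard_ne_zero (by omega)) _ hsurvivors
  have hsep : {P ∈ uncovered C S | ¬ Covered (insert c S) P} = uncovered C (insert c S) := by
    ext P
    exact ⟨fun h => ⟨h.1.1, h.2⟩,
      fun h => ⟨⟨h.1, fun hPS => h.2 (hPS.mono (Set.subset_insert c S))⟩, h.2⟩⟩
  exact ⟨c, hc, hD ▸ hsep ▸ hle⟩

theorem exists_covering_of_three_le_ncard {T : Set (PG2 F)} (hT : T ⊆ C)
    (hT3 : 3 ≤ T.ncard) :
    ∃ S ⊆ C, (∀ P ∈ Mset C, Covered S P) ∧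
      S.ncard ≤ T.ncard + (uncovered C T).ncard := by
  have hpatch : ∀ P ∈ uncovered C T, ∃ c ∈ C, Covered (insert c T) P := fun P hP => by
    have := ncard_le_ncard_covering_insert_add_two hCQ hArc hC hT hP.1 hP.2
    obtain ⟨c, hc, hcov⟩ := Set.nonempty_of_ncard_ne_zero (by omega :
      {c ∈ C \ T | Covered (insert c T) P}.ncard ≠ 0)
    exact ⟨c, hc.1, hcov⟩
  choose! g hgC hgcov using hpatch
  refine ⟨T ∪ g '' uncovered C T, Set.union_subset hT (Set.image_subset_iff.2 hgC),
    fun P hP => ?_, (Set.ncard_union_le _ _).trans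
      (add_le_add le_rfl (Set.ncard_image_le (Set.toFinite (uncovered C T))))⟩
  by_cases hPT : Covered T P
  · exact hPT.mono Set.subset_union_left
  · exact (hgcov P ⟨hP, hPT⟩).mono (Set.insert_subset (Or.inr ⟨P, ⟨hP, hPT⟩, rfl⟩)
      Set.subset_union_left)

theorem exists_greedy_subset {q : ℕ} (hq : Fintype.card F = q) (hCq : C.ncard = q + 1) (w : ℕ)
    (hw : 2 * w ≤ q + 2) : ∃ T ⊆ C, T.ncard = w + 1 ∧
      ((uncovered C T).ncard : ℝ) ≤ q ^ 2 * ∏ j ∈ Finset.Icc 1 w, greedyRatio q j := by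
  induction w with
  | zero =>
    obtain ⟨c, hc⟩ := Set.nonempty_of_ncard_ne_zero (by omega : C.ncard ≠ 0)
    refine ⟨{c}, Set.singleton_subset_iff.2 hc, Set.ncard_singleton c, ?_⟩
    have := (Set.ncard_le_ncard fun P (hP : P ∈ uncovered C {c}) => hP.1).trans
      (ncard_Mset_le hq hCq)
    simpa using (Nat.cast_le (α := ℝ)).2 this
  | succ w ih =>
    obtain ⟨T, hTC, hTw, hTunc⟩ := ih (by omega)
    obtain ⟨c, hc, hstep⟩ := exists_mul_ncard_uncovered_insert_le hCQ hArc hC hCq hTC (by omega)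
    refine ⟨insert c T, Set.insert_subset hc.1 hTC, by rw [Set.ncard_insert_of_notMem hc.2, hTw],
      ?_⟩
    have hstepR : ((q : ℝ) + 1 - (w + 1 : ℕ)) * (uncovered C (insert c T)).ncard ≤
        (uncovered C T).ncard * ((q : ℝ) + 3 - 2 * (w + 1 : ℕ)) := by
      rw [hTw] at hstep
      have := (Nat.cast_le (α := ℝ)).2 hstep
      rw [Nat.cast_mul, Nat.cast_mul, Nat.cast_sub (by omega), Nat.cast_sub (by omega)] at this
      push_cast at this ⊢
      linarith
    have hpos : (0 : ℝ) < (q : ℝ) + 1 - (w + 1 : ℕ) := by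
      have : ((w + 1 : ℕ) : ℝ) ≤ q := by exact_mod_cast (by omega : w + 1 ≤ q)
      linarith
    rw [Finset.prod_Icc_succ_top (by omega), ← mul_assoc]
    calc ((uncovered C (insert c T)).ncard : ℝ)
          ≤ (uncovered C T).ncard * greedyRatio q (w + 1) := by
          rw [greedyRatio, mul_div_assoc', le_div_iff₀ hpos, mul_comm]
          exact hstepR
      _ ≤ _ := mul_le_mul_of_nonneg_right hTunc (greedyRatio_nonneg hw)

end Counting

section Analytic

open Real

theorem log_div_le_sum_inv {q w : ℕ} (hw : w ≤ q) :
    log (((q : ℝ) + 1) / ((q : ℝ) + 1 - w)) ≤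
      ∑ j ∈ Finset.Icc 1 w, 1 / ((q : ℝ) + 1 - j) := by
  induction w with
  | zero => simp
  | succ w ih =>
    have hx : (0 : ℝ) < q - w := by
      have : (w : ℝ) + 1 ≤ q := by exact_mod_cast hw
      linarith
    have hstep : log ((q : ℝ) + 1 - w) - log ((q : ℝ) - w) ≤ 1 / ((q : ℝ) - w) := by
      have := log_le_sub_one_of_pos (div_pos (by linarith : (0 : ℝ) < q + 1 - w) hx)
      rw [log_div (by linarith) hx.ne'] at this
      convert this using 1
      field_simp
      ring
    have hih := ih (by omega)
    rw [log_div (by linarith) (by linarith)] at hih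
    rw [Finset.sum_Icc_succ_top (by omega), log_div (by linarith) (by push_cast; linarith)]
    push_cast
    rw [show (q : ℝ) + 1 - (w + 1) = q - w by ring]
    linarith

theorem prod_greedyRatio_le_exp {q w : ℕ} (hq : 1 ≤ q) (hw : 2 * w ≤ q + 2) :
    ∏ j ∈ Finset.Icc 1 w, greedyRatio q j ≤
      exp (w - ((q : ℝ) - 1) * log (((q : ℝ) + 1) / ((q : ℝ) + 1 - w))) := by
  have hq' : (1 : ℝ) ≤ q := by exact_mod_cast hq
  calc ∏ j ∈ Finset.Icc 1 w, greedyRatio q j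
      ≤ ∏ j ∈ Finset.Icc 1 w, exp (1 - ((q : ℝ) - 1) * (1 / ((q : ℝ) + 1 - j))) := by
        refine Finset.prod_le_prod (fun j hj => greedyRatio_nonneg ?_) fun j hj => ?_
        · have := (Finset.mem_Icc.1 hj).2
          omega
        · have hj : (j : ℝ) ≤ q := by
            exact_mod_cast (by have := (Finset.mem_Icc.1 hj).2; omega : j ≤ q)
          have hden : (q : ℝ) + 1 - j ≠ 0 := by linarith
          have hratio :
              greedyRatio q j = (1 - ((q : ℝ) - 1) * (1 / ((q : ℝ) + 1 - j))) + 1 := by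
            unfold greedyRatio
            field_simp
            ring
          exact hratio ▸ add_one_le_exp _
    _ = exp (w - ((q : ℝ) - 1) * ∑ j ∈ Finset.Icc 1 w, 1 / ((q : ℝ) + 1 - j)) := by
        rw [← exp_sum, Finset.sum_sub_distrib, Finset.mul_sum]
        simp
    _ ≤ _ := exp_le_exp.2 <| sub_le_sub_left
        (mul_le_mul_of_nonneg_left (log_div_le_sum_inv (by omega)) (by linarith)) _

theorem sq_mul_prod_greedyRatio_le {q w : ℕ} (hq : 2 ≤ q) (hw : 2 * w ≤ q + 2)
    (hyp : (w : ℝ) - ((q : ℝ) - 1) * log (((q : ℝ) + 1) / ((q : ℝ) + 1 - w)) ≤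
      log (1 / ((q : ℝ) * √(3 * q * log q)))) :
    (q : ℝ) ^ 2 * ∏ j ∈ Finset.Icc 1 w, greedyRatio q j ≤ √(q / (3 * log q)) := by
  have hq' : (1 : ℝ) < q := by exact_mod_cast hq
  have hlog : 0 < log q := log_pos hq'
  have hsqrt : 0 < √(3 * q * log q) := sqrt_pos.2 (by positivity)
  calc (q : ℝ) ^ 2 * ∏ j ∈ Finset.Icc 1 w, greedyRatio q j
      ≤ q ^ 2 * (1 / (q * √(3 * q * log q))) := by
        gcongr
        refine (prod_greedyRatio_le_exp (by omega) hw).trans ?_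
        exact (exp_le_exp.2 hyp).trans (exp_log (by positivity)).le
    _ = √(q / (3 * log q)) := by
        rw [eq_comm, sqrt_eq_iff_mul_self_eq (by positivity) (by positivity)]
        field_simp
        rw [sq_sqrt (by positivity)]

theorem sqrt_div_three_log_lt {q : ℕ} (hq : 5 ≤ q) :
    √(q / (3 * log q)) < ((q : ℝ) - 2) / 2 := by
  have hq' : (5 : ℝ) ≤ q := by exact_mod_cast hq
  have hlog : 1 ≤ log q := by
    rw [le_log_iff_exp_le (by linarith)]
    linarith [exp_one_lt_d9]
  rw [sqrt_lt' (by linarith)]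
  calc (q : ℝ) / (3 * log q) ≤ q / 3 := by gcongr; linarith
    _ < (((q : ℝ) - 2) / 2) ^ 2 := by nlinarith

theorem two_le_of_sq_mul_prod_greedyRatio_le {q w : ℕ} (hq : 5 ≤ q)
    (h : (q : ℝ) ^ 2 * ∏ j ∈ Finset.Icc 1 w, greedyRatio q j ≤ √(q / (3 * log q))) :
    2 ≤ w := by
  have hq' : (5 : ℝ) ≤ q := by exact_mod_cast hq
  have hlt := (h.trans_lt (sqrt_div_three_log_lt hq))
  by_contra! hw
  interval_cases w
  · simp only [zero_lt_one, Finset.Icc_eq_empty_of_lt, Finset.prod_empty, mul_one] at hlt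
    nlinarith
  · simp only [Finset.Icc_self, Finset.prod_singleton, greedyRatio] at hlt
    rw [mul_div_assoc', div_lt_iff₀ (by push_cast; linarith)] at hlt
    push_cast at hlt
    nlinarith

end Analytic

variable {F : Type} [Field F] [Fintype F]

theorem tAC_le_ncard {C S : Set (PG2 F)} (h : IsACSubset C S) : tAC C ≤ S.ncard :=
  Nat.sInf_le ⟨S, h, rfl⟩

/-- Implicit bound B: if `w - (q-1)·ln((q+1)/(q+1-w)) ≤ ln(1/(q√(3q ln q)))`
with `w < (q+3)/2`, then `t(q) ≤ w + 1 + √(q/(3 ln q))`. -/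
theorem tAC_implicit_bound_B (q : ℕ) (hq : Fintype.card F = q) (hq5 : 5 ≤ q)
    (C : Set (PG2 F)) (hC : IsConic C)
    (w : ℕ) (hwq : 2 * w < q + 3)
    (hyp : (w : ℝ) - ((q : ℝ) - 1) * Real.log (((q : ℝ) + 1) / ((q : ℝ) + 1 - w)) ≤
      Real.log (1 / ((q : ℝ) * Real.sqrt (3 * q * Real.log q)))) :
    (tAC C : ℝ) ≤ (w : ℝ) + 1 + Real.sqrt ((q : ℝ) / (3 * Real.log q)) := by
  obtain ⟨⟨Q, hCQ⟩, hArc, hCq⟩ := hC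
  rw [hq] at hCq
  have hC1 : 1 < C.ncard := by omega
  have hbound := sq_mul_prod_greedyRatio_le (by omega) (by omega) hyp
  have hw2 := two_le_of_sq_mul_prod_greedyRatio_le hq5 hbound
  obtain ⟨T, hTC, hTw, hTunc⟩ := exists_greedy_subset hCQ hArc hC1 hq hCq w (by omega)
  obtain ⟨S, hSC, hScov, hScard⟩ :=
    exists_covering_of_three_le_ncard hCQ hArc hC1 hTC (by omega)
  have hSξ : (S.ncard : ℝ) ≤ w + 1 + √(q / (3 * Real.log q)) := by
    have : (S.ncard : ℝ) ≤ (w + 1 : ℕ) + (uncovered C T).ncard := by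
      exact_mod_cast hTw ▸ hScard
    push_cast at this
    linarith
  have hSq : (S.ncard : ℝ) < C.ncard := by
    have : (2 * w : ℝ) ≤ q + 2 := by exact_mod_cast (by omega : 2 * w ≤ q + 2)
    rw [hCq]
    push_cast
    linarith [sqrt_div_three_log_lt hq5]
  have hSC' : S ⊂ C := Set.ssubset_iff_subset_ne.2 ⟨hSC, fun h => hSq.ne (by rw [h])⟩
  exact (Nat.cast_le.2 (tAC_le_ncard ⟨hSC', hScov⟩)).trans hSξ
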